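/- Let T be an Aronszajn tree and E ⊆ ω₁ uncountable. Then there is a strictly order-preserving map f : T_E → ℚ if and only if there is a map g : T_E → ω such that whenever x < y are both in T_E, g(x) ≠ g(y). -/

import Mathlib

open Cardinal Set

/-- The first uncountable ordinal. -/
noncomputable def omega1 : Ordinal := (Cardinal.aleph 1).ord

universe u_2

/-- A tree of height `ω₁`: a partial order equipped with a rank (height) function into the
countable ordinals which is strictly monotone, has countable levels, and whose sets of
predecessors are linearly ordered. -/
structure OmegaOneTree (T : Type*) [PartialOrder T] where
  rk : T → Ordinal.{u_2}
  rk_lt_omega1 : ∀ x, rk x < omega1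
  rk_strictMono : ∀ {x y : T}, x < y → rk x < rk y
  levels_countable : ∀ β : Ordinal, {x : T | rk x = β}.Countable
  pred_linear : ∀ x y z : T, y ≤ x → z ≤ x → y ≤ z ∨ z ≤ y

/-- `C` is a closed unbounded subset of `ω₁`. -/
def IsClubBelow (C : Set Ordinal) : Prop :=
  C ⊆ Set.Iio omega1 ∧ (∀ α < omega1, ∃ β ∈ C, α < β) ∧
    ∀ δ, 0 < δ → δ < omega1 → (∀ β < δ, ∃ γ ∈ C, β < γ ∧ γ < δ) → δ ∈ C

/-- `S` is a stationary subset of `ω₁`. -/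
def IsStationaryBelow (S : Set Ordinal) : Prop :=
  S ⊆ Set.Iio omega1 ∧ ∀ C, IsClubBelow C → (S ∩ C).Nonempty

/-!
Color `T_E` by `g` so that no color repeats along a chain, and call `z ≤ x` a record of `x` if
every `w` with `z < w ≤ x` has a larger color than `z`. Send `x` to `∑ 2⁻ᵏ` over the colors `k`
of its records. If `x < y` and `w` has the least color on `(x, y]`, then `w` is a record of `y`,
no predecessor of `x` has color `g w`, and since predecessors form a chain, `x` and `y` have the
same records of color below `g w`. So the binary expansion of the image of `y` beats that of `x`
lexicographically. Conversely, a strictly monotone map into the countable set `ℚ` is injective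
on chains.
-/

lemma sum_half_pow_lt_half_pow {s : Finset ℕ} {k : ℕ} (hs : ∀ i ∈ s, k < i) :
    ∑ i ∈ s, (1 / 2 : ℚ) ^ i < (1 / 2) ^ k := by
  set N := s.sup id + k + 1
  have hsub : s ⊆ Finset.Ico (k + 1) N := fun i hi =>
    Finset.mem_Ico.mpr ⟨hs i hi, Nat.lt_succ_of_le (le_add_right (Finset.le_sup (f := id) hi))⟩
  calc ∑ i ∈ s, (1 / 2 : ℚ) ^ i
      ≤ ∑ i ∈ Finset.Ico (k + 1) N, (1 / 2 : ℚ) ^ i :=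
        Finset.sum_le_sum_of_subset_of_nonneg hsub fun _ _ _ => by positivity
    _ = (1 / 2) ^ k - 2 * (1 / 2) ^ N := by
        rw [geom_sum_Ico (by norm_num) (by omega), pow_succ]; ring
    _ < (1 / 2) ^ k := by linarith [pow_pos (by norm_num : (0 : ℚ) < 1 / 2) N]

lemma sum_half_pow_lt_of_lex {A B : Finset ℕ} {k : ℕ} (hagree : ∀ i < k, i ∈ A ↔ i ∈ B)
    (hA : k ∉ A) (hB : k ∈ B) :
    ∑ i ∈ A, (1 / 2 : ℚ) ^ i < ∑ i ∈ B, (1 / 2 : ℚ) ^ i := by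
  have hlow : A.filter (· < k) = B.filter (· < k) := by
    ext i
    simp only [Finset.mem_filter]
    exact ⟨fun h => ⟨(hagree i h.2).mp h.1, h.2⟩, fun h => ⟨(hagree i h.2).mpr h.1, h.2⟩⟩
  have hhighA : ∑ i ∈ A.filter (¬ · < k), (1 / 2 : ℚ) ^ i < (1 / 2) ^ k :=
    sum_half_pow_lt_half_pow fun i hi => by
      obtain ⟨hiA, hik⟩ := Finset.mem_filter.mp hi
      exact lt_of_le_of_ne (not_lt.mp hik) fun h => hA (h ▸ hiA)
  have hhighB : (1 / 2 : ℚ) ^ k ≤ ∑ i ∈ B.filter (¬ · < k), (1 / 2 : ℚ) ^ i :=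
    Finset.single_le_sum (f := fun i => (1 / 2 : ℚ) ^ i) (fun _ _ => by positivity)
      (Finset.mem_filter.mpr ⟨hB, lt_irrefl k⟩)
  rw [← Finset.sum_filter_add_sum_filter_not A (· < k),
    ← Finset.sum_filter_add_sum_filter_not B (· < k), hlow]
  linarith

section Records

variable {S : Type*} [PartialOrder S]

def IsRecord (g : S → ℕ) (z x : S) : Prop :=
  z ≤ x ∧ ∀ w, z < w → w ≤ x → g z < g w

lemma IsRecord.color_le {g : S → ℕ} {z x : S} (h : IsRecord g z x) : g z ≤ g x :=
  h.1.eq_or_lt.elim (fun h => h ▸ le_rfl) fun hlt => (h.2 x hlt le_rfl).le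

open Classical in
noncomputable def recordColors (g : S → ℕ) (x : S) : Finset ℕ :=
  {k ∈ Finset.range (g x + 1) | ∃ z, IsRecord g z x ∧ g z = k}

lemma mem_recordColors {g : S → ℕ} {x : S} {k : ℕ} :
    k ∈ recordColors g x ↔ ∃ z, IsRecord g z x ∧ g z = k := by
  classical
  simp only [recordColors, Finset.mem_filter, Finset.mem_range, and_iff_right_iff_imp]
  rintro ⟨z, hz, rfl⟩
  exact Nat.lt_succ_of_le hz.color_le

lemma le_or_lt_of_le_of_le (hlin : ∀ x y z : S, y ≤ x → z ≤ x → y ≤ z ∨ z ≤ y)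
    {a b c : S} (ha : a ≤ c) (hb : b ≤ c) : a ≤ b ∨ b < a :=
  (hlin c a b ha hb).elim Or.inl fun h => h.lt_or_eq.elim Or.inr fun h => Or.inl h.ge

variable {g : S → ℕ} {x y w : S}

lemma isRecord_of_isLeast_color (hg : ∀ x y : S, x < y → g x ≠ g y) (hw : w ∈ Ioc x y)
    (hmin : ∀ v ∈ Ioc x y, g w ≤ g v) : IsRecord g w y :=
  ⟨hw.2, fun v hwv hvy =>
    lt_of_le_of_ne (hmin v ⟨hw.1.trans hwv, hvy⟩) (hg w v hwv)⟩

lemma isRecord_iff_of_color_lt (hlin : ∀ x y z : S, y ≤ x → z ≤ x → y ≤ z ∨ z ≤ y)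
    (hxy : x < y) (hmin : ∀ v ∈ Ioc x y, g w ≤ g v) {z : S} (hz : g z < g w) :
    IsRecord g z x ↔ IsRecord g z y := by
  constructor
  · rintro ⟨hzx, hrec⟩
    refine ⟨hzx.trans hxy.le, fun v hzv hvy => ?_⟩
    rcases le_or_lt_of_le_of_le hlin hvy hxy.le with hvx | hxv
    · exact hrec v hzv hvx
    · exact hz.trans_le (hmin v ⟨hxv, hvy⟩)
  · rintro ⟨hzy, hrec⟩
    have hzx : z ≤ x := (le_or_lt_of_le_of_le hlin hzy hxy.le).resolve_right
      fun hxz => (hmin z ⟨hxz, hzy⟩).not_gt hz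
    exact ⟨hzx, fun v hzv hvx => hrec v hzv (hvx.trans hxy.le)⟩

theorem strictMono_sum_recordColors (hlin : ∀ x y z : S, y ≤ x → z ≤ x → y ≤ z ∨ z ≤ y)
    (hg : ∀ x y : S, x < y → g x ≠ g y) :
    StrictMono fun x => ∑ k ∈ recordColors g x, (1 / 2 : ℚ) ^ k := by
  intro x y hxy
  have hne : (Ioc x y).Nonempty := ⟨y, hxy, le_rfl⟩
  set w := Function.argminOn g (Ioc x y) hne
  have hw : w ∈ Ioc x y := Function.argminOn_mem g _ hne
  have hmin : ∀ v ∈ Ioc x y, g w ≤ g v := fun v hv => not_lt.mp (Function.not_lt_argminOn g _ hv)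
  refine sum_half_pow_lt_of_lex (k := g w) (fun k hk => ?_) ?_ ?_
  · simp only [mem_recordColors]
    exact exists_congr fun z => and_congr_left fun hzk =>
      isRecord_iff_of_color_lt hlin hxy hmin (hzk ▸ hk)
  · rw [mem_recordColors]
    rintro ⟨z, hz, hzw⟩
    exact hg z w (hz.1.trans_lt hw.1) hzw
  · exact mem_recordColors.mpr ⟨w, isRecord_of_isLeast_color hg hw hmin, rfl⟩

end Records

theorem stmt2_general {T : Type*} [PartialOrder T] (t : OmegaOneTree T)
    (E : Set Ordinal) :
    (∃ f : {x : T // t.rk x ∈ E} → ℚ,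
        ∀ x y : {x : T // t.rk x ∈ E}, (x : T) < (y : T) → f x < f y) ↔
      (∃ g : {x : T // t.rk x ∈ E} → ℕ,
        ∀ x y : {x : T // t.rk x ∈ E}, (x : T) < (y : T) → g x ≠ g y) := by
  constructor
  · rintro ⟨f, hf⟩
    exact ⟨fun x => Encodable.encode (f x), fun x y h he =>
      (hf x y h).ne (Encodable.encode_injective he)⟩
  · rintro ⟨g, hg⟩
    have hlin : ∀ x y z : {x : T // t.rk x ∈ E}, y ≤ x → z ≤ x → y ≤ z ∨ z ≤ y :=
      fun x y z => t.pred_linear x y z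
    exact ⟨_, fun x y h => strictMono_sum_recordColors hlin hg h⟩

/-- For an Aronszajn tree `T` and uncountable `E ⊆ ω₁`, there is a strictly
order-preserving map `T_E → ℚ` iff there is a map `g : T_E → ω` with `g x ≠ g y` whenever
`x < y` in `T_E`. -/
theorem stmt2 {T : Type*} [PartialOrder T] (t : OmegaOneTree T)
    (hAron : ∀ c : Set T, IsChain (· ≤ ·) c → c.Countable)
    (E : Set Ordinal) (hE : E ⊆ Set.Iio omega1) (hEunc : ¬ E.Countable) :
    (∃ f : {x : T // t.rk x ∈ E} → ℚ,
        ∀ x y : {x : T // t.rk x ∈ E}, (x : T) < (y : T) → f x < f y) ↔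
      (∃ g : {x : T // t.rk x ∈ E} → ℕ,
        ∀ x y : {x : T // t.rk x ∈ E}, (x : T) < (y : T) → g x ≠ g y) :=
  stmt2_general t E
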